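/- arXiv:1703.01332 — 2 statements merged into one kernel-verified Lean document; each statement's English description precedes it below -/
import Mathlib

section
/- Let h : ℝ^p → [0,+∞] be any penalty function (not necessarily convex) and assume there exists a solution β̂ to min_{β∈ℝ^p} (‖Xβ − y‖² + 2h(β)). Then for all t ≥ 0, F(‖X(β̂ − β*)‖) ≥ F(t); that is, the prediction error ‖X(β̂ − β*)‖ is a maximizer of the function F for every realization of the noise vector ε ∈ ℝ^n. -/
open scoped ENNReal

/-- Euclidean norm of a vector in `ℝ^k`. -/
noncomputable def l2norm {k : ℕ} (v : Fin k → ℝ) : ℝ := Real.sqrt (∑ i, (v i) ^ 2)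

/-- Euclidean inner product on `ℝ^k`. -/
noncomputable def dotp {k : ℕ} (u v : Fin k → ℝ) : ℝ := ∑ i, u i * v i

/-- The function `F(t) = sup_{β : ‖X(β-β*)‖ ≤ t} (εᵀX(β-β*) - h(β)) - t²/2`,
with values in `EReal` (the sup over the empty set is `⊥ = -∞`). -/
noncomputable def Fval {n p : ℕ} (X : Matrix (Fin n) (Fin p) ℝ) (bs : Fin p → ℝ)
    (h : (Fin p → ℝ) → ℝ≥0∞) (e : Fin n → ℝ) (t : ℝ) : EReal :=
  sSup {x : EReal | ∃ b : Fin p → ℝ, l2norm (X.mulVec (b - bs)) ≤ t ∧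
      x = (dotp e (X.mulVec (b - bs)) : EReal) - (h b : EReal)} - ((t ^ 2 / 2 : ℝ) : EReal)

/-! Expanding `‖Xβ - y‖² = ‖X(β - β*)‖² - 2εᵀX(β - β*) + ‖ε‖²`, minimality of `β̂` says that
`β̂` maximizes `φ β - ρ(β)²/2`, where `φ β = εᵀX(β - β*) - h(β)` and `ρ β = ‖X(β - β*)‖`.
Hence every `β` with `ρ β ≤ t` has `φ β ≤ φ β̂ - ρ(β̂)²/2 + t²/2 ≤ F(ρ β̂) + t²/2`. -/

theorem EReal.sSup_sub_le_sSup_sub_of_forall_sub_le {β : Type*} (φ : β → EReal) (ρ : β → ℝ)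
    (q : ℝ → ℝ) (hq : MonotoneOn q (Set.Ici 0)) (hρ : ∀ b, 0 ≤ ρ b) (b₀ : β)
    (hmax : ∀ b, φ b - q (ρ b) ≤ φ b₀ - q (ρ b₀)) (t : ℝ) :
    sSup {x | ∃ b, ρ b ≤ t ∧ x = φ b} - q t ≤
      sSup {x | ∃ b, ρ b ≤ ρ b₀ ∧ x = φ b} - q (ρ b₀) := by
  refine EReal.sub_le_of_le_add (sSup_le ?_)
  rintro _ ⟨b, hbt, rfl⟩
  have hqb : q (ρ b) ≤ q t := hq (hρ b) ((hρ b).trans hbt) hbt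
  have hb₀ : φ b₀ ≤ sSup {x | ∃ b, ρ b ≤ ρ b₀ ∧ x = φ b} := le_sSup ⟨b₀, le_rfl, rfl⟩
  calc φ b = φ b - q (ρ b) + q (ρ b) := EReal.sub_add_cancel.symm
    _ ≤ φ b₀ - q (ρ b₀) + q t := add_le_add (hmax b) (EReal.coe_le_coe_iff.2 hqb)
    _ ≤ _ := by gcongr; exact EReal.sub_le_sub hb₀ le_rfl

theorem EReal.coe_sub_sub_coe (x y : ℝ) (e : EReal) :
    (x : EReal) - e - y = ((x - y : ℝ) : EReal) - e := by
  rw [EReal.coe_sub, sub_eq_add_neg, sub_eq_add_neg, sub_eq_add_neg, sub_eq_add_neg,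
    add_right_comm]

theorem EReal.coe_sub_le_coe_sub_of_ofReal_add_two_mul_le {r r' : ℝ} {u v : ℝ≥0∞}
    (hr : 0 ≤ r) (hr' : 0 ≤ r') (h : ENNReal.ofReal r + 2 * u ≤ ENNReal.ofReal r' + 2 * v)
    (c : ℝ) : ((c - r' / 2 : ℝ) : EReal) - v ≤ ((c - r / 2 : ℝ) : EReal) - u := by
  rcases eq_or_ne v ⊤ with rfl | hv
  · simp [EReal.sub_top]
  have hu : u ≠ ⊤ := by
    rintro rfl
    simp_all [ENNReal.add_eq_top, ENNReal.mul_eq_top]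
  have hreal : r + 2 * u.toReal ≤ r' + 2 * v.toReal := by
    have := (ENNReal.toReal_le_toReal (by finiteness) (by finiteness)).2 h
    rwa [ENNReal.toReal_add (by finiteness) (by finiteness),
      ENNReal.toReal_add (by finiteness) (by finiteness), ENNReal.toReal_mul,
      ENNReal.toReal_mul, ENNReal.toReal_ofReal hr, ENNReal.toReal_ofReal hr',
      ENNReal.toReal_ofNat] at this
  rw [← EReal.coe_ennreal_toReal hu, ← EReal.coe_ennreal_toReal hv, ← EReal.coe_sub,
    ← EReal.coe_sub, EReal.coe_le_coe_iff]
  linarith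

theorem l2norm_nonneg {k : ℕ} (v : Fin k → ℝ) : 0 ≤ l2norm v := Real.sqrt_nonneg _

theorem l2norm_sq {k : ℕ} (v : Fin k → ℝ) : l2norm v ^ 2 = ∑ i, v i ^ 2 :=
  Real.sq_sqrt (Finset.sum_nonneg fun _ _ => sq_nonneg _)

theorem l2norm_sub_sq {k : ℕ} (u v : Fin k → ℝ) :
    l2norm (u - v) ^ 2 = l2norm u ^ 2 - 2 * dotp v u + l2norm v ^ 2 := by
  simp only [l2norm_sq, dotp, Finset.mul_sum, ← Finset.sum_sub_distrib, ← Finset.sum_add_distrib,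
    Pi.sub_apply]
  exact Finset.sum_congr rfl fun _ _ => by ring

theorem l2norm_mulVec_sub_sq {n p : ℕ} (X : Matrix (Fin n) (Fin p) ℝ) (bs : Fin p → ℝ)
    (ε : Fin n → ℝ) (b : Fin p → ℝ) :
    l2norm (X.mulVec b - (X.mulVec bs + ε)) ^ 2 =
      l2norm (X.mulVec (b - bs)) ^ 2 - 2 * dotp ε (X.mulVec (b - bs)) + l2norm ε ^ 2 := by
  rw [← l2norm_sub_sq, Matrix.mulVec_sub, sub_add_eq_sub_sub]

theorem dotp_sub_sub_le_of_penalized_residual_le {n p : ℕ} (X : Matrix (Fin n) (Fin p) ℝ)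
    (bs : Fin p → ℝ) (ε : Fin n → ℝ) (h : (Fin p → ℝ) → ℝ≥0∞) (bhat b : Fin p → ℝ)
    (hmin : ENNReal.ofReal (l2norm (X.mulVec bhat - (X.mulVec bs + ε)) ^ 2) + 2 * h bhat ≤
        ENNReal.ofReal (l2norm (X.mulVec b - (X.mulVec bs + ε)) ^ 2) + 2 * h b) :
    (dotp ε (X.mulVec (b - bs)) : EReal) - h b - (l2norm (X.mulVec (b - bs)) ^ 2 / 2 : ℝ) ≤
      (dotp ε (X.mulVec (bhat - bs)) : EReal) - h bhat -
        (l2norm (X.mulVec (bhat - bs)) ^ 2 / 2 : ℝ) := by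
  have := EReal.coe_sub_le_coe_sub_of_ofReal_add_two_mul_le (sq_nonneg _) (sq_nonneg _) hmin
    (l2norm ε ^ 2 / 2)
  rw [l2norm_mulVec_sub_sq, l2norm_mulVec_sub_sq] at this
  rw [EReal.coe_sub_sub_coe, EReal.coe_sub_sub_coe]
  convert this using 3 <;> ring

/-- if `β̂` solves `min ‖Xβ - y‖² + 2h(β)` where `y = Xβ* + ε`, then for every
`t ≥ 0` we have `F(t) ≤ F(‖X(β̂ - β*)‖)`, i.e. the prediction error maximizes `F`. -/
theorem prediction_error_maximizes_F {n p : ℕ} (X : Matrix (Fin n) (Fin p) ℝ)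
    (bs : Fin p → ℝ) (ε : Fin n → ℝ) (y : Fin n → ℝ) (hy : y = X.mulVec bs + ε)
    (h : (Fin p → ℝ) → ℝ≥0∞) (bhat : Fin p → ℝ)
    (hmin : ∀ b : Fin p → ℝ,
      ENNReal.ofReal (l2norm (X.mulVec bhat - y) ^ 2) + 2 * h bhat ≤
        ENNReal.ofReal (l2norm (X.mulVec b - y) ^ 2) + 2 * h b) :
    ∀ t : ℝ, 0 ≤ t →
      Fval X bs h ε t ≤ Fval X bs h ε (l2norm (X.mulVec (bhat - bs))) := by
  subst hy
  intro t _
  exact EReal.sSup_sub_le_sSup_sub_of_forall_sub_le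
    (fun b => (dotp ε (X.mulVec (b - bs)) : EReal) - h b) (fun b => l2norm (X.mulVec (b - bs)))
    (fun t => t ^ 2 / 2) (fun _ ha _ _ hab => by dsimp only; gcongr) (fun _ => l2norm_nonneg _) bhat
    (fun b => dotp_sub_sub_le_of_penalized_residual_le X bs ε h bhat b (hmin b)) t
end

section
/- If the penalty function h : ℝ^p → [0,+∞] is convex, then the function F is 1-strongly concave, i.e., the function t ↦ F(t) + t²/2 is concave on [0,∞). -/
open scoped ENNReal

/-!
`F(t) + t²/2` is the supremum of the objective `β ↦ εᵀX(β - β*) - h(β)`, which is concave because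
`h` is convex, over the sublevel set `{β | ‖X(β - β*)‖ ≤ t}` of a convex function. If `β₁` and `β₂`
are feasible at levels `s` and `t`, then `aβ₁ + (1 - a)β₂` is feasible at level `as + (1 - a)t`,
so concavity of the objective passes to the supremum. In `EReal` the two suprema are taken
separately, since multiplication by a positive real commutes with `sSup`.
-/

theorem smul_add_smul_sub_eq {E : Type*} [AddCommGroup E] [Module ℝ E] {a c : ℝ}
    (hac : a + c = 1) (x y z : E) : a • x + c • y - z = a • (x - z) + c • (y - z) := by
  obtain rfl : c = 1 - a := by linarith
  module

namespace EReal

theorem coe_mul_sSup {a : ℝ} (ha : 0 < a) (S : Set EReal) :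
    (a : EReal) * sSup S = sSup (((a : EReal) * ·) '' S) :=
  Monotone.map_sSup_of_continuousAt
    (EReal.Tendsto.const_mul Filter.tendsto_id (.inl (coe_ne_bot a)) (.inl (coe_ne_top a)))
    (fun _ _ hxy => mul_le_mul_of_nonneg_left hxy (by exact_mod_cast ha.le))
    (coe_mul_bot_of_pos ha)

theorem sSup_add_sSup_le {S T : Set EReal} {c : EReal}
    (h : ∀ x ∈ S, ∀ y ∈ T, x + y ≤ c) : sSup S + sSup T ≤ c := by
  refine add_le_of_forall_lt fun x' hx' y' hy' => ?_
  obtain ⟨x, hxS, hx⟩ := lt_sSup_iff.1 hx'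
  obtain ⟨y, hyT, hy⟩ := lt_sSup_iff.1 hy'
  exact (add_le_add hx.le hy.le).trans (h x hxS y hyT)

theorem coe_mul_sub_add_coe_mul_sub_le {a c d₁ d₂ : ℝ} (ha : 0 < a) (hc : 0 < c)
    {h₁ h₂ h₃ : ℝ≥0∞} (hh : h₃ ≤ ENNReal.ofReal a * h₁ + ENNReal.ofReal c * h₂) :
    (a : EReal) * (d₁ - h₁) + c * (d₂ - h₂) ≤ ((a * d₁ + c * d₂ : ℝ) : EReal) - h₃ := by
  rcases eq_or_ne h₁ ⊤ with rfl | h₁_ne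
  · simp [coe_mul_bot_of_pos ha]
  rcases eq_or_ne h₂ ⊤ with rfl | h₂_ne
  · simp [coe_mul_bot_of_pos hc]
  lift h₁ to NNReal using h₁_ne
  lift h₂ to NNReal using h₂_ne
  lift h₃ to NNReal using ne_top_of_le_ne_top (by finiteness) hh
  rw [← ENNReal.ofNNReal_toNNReal, ← ENNReal.ofNNReal_toNNReal] at hh
  have hh' := NNReal.coe_le_coe.2 (by exact_mod_cast hh)
  push_cast [Real.coe_toNNReal _ ha.le, Real.coe_toNNReal _ hc.le] at hh'
  simp only [coe_nnreal_eq_coe_real]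
  norm_cast
  linarith

end EReal

theorem sSup_image_sublevel_concave {E : Type*} [AddCommGroup E] [Module ℝ E] {φ : E → EReal}
    {g : E → ℝ}
    (hφ : ∀ x y : E, ∀ a : ℝ, 0 < a → a < 1 →
      (a : EReal) * φ x + ((1 - a : ℝ) : EReal) * φ y ≤ φ (a • x + (1 - a) • y))
    (hg : ConvexOn ℝ Set.univ g) (s t : ℝ) {a : ℝ} (ha₀ : 0 ≤ a) (ha₁ : a ≤ 1) :
    (a : EReal) * sSup (φ '' {x | g x ≤ s}) + ((1 - a : ℝ) : EReal) * sSup (φ '' {x | g x ≤ t}) ≤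
      sSup (φ '' {x | g x ≤ a * s + (1 - a) * t}) := by
  rcases ha₀.eq_or_lt with rfl | ha₀
  · simp
  rcases ha₁.eq_or_lt with rfl | ha₁
  · simp
  have hc : 0 < 1 - a := sub_pos.2 ha₁
  rw [EReal.coe_mul_sSup ha₀, EReal.coe_mul_sSup hc, ← Set.image_comp, ← Set.image_comp]
  refine EReal.sSup_add_sSup_le ?_
  rintro _ ⟨x, hx, rfl⟩ _ ⟨y, hy, rfl⟩
  refine le_sSup_of_le ⟨a • x + (1 - a) • y, ?_, rfl⟩ (hφ x y a ha₀ ha₁)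
  calc g (a • x + (1 - a) • y) ≤ a • g x + (1 - a) • g y :=
        hg.2 trivial trivial ha₀.le hc.le (add_sub_cancel a 1)
    _ ≤ a * s + (1 - a) * t := by
        simp only [smul_eq_mul]
        gcongr
        exacts [hx, hy]

section LinearModel

theorem l2norm_eq_norm {k : ℕ} (v : Fin k → ℝ) : l2norm v = ‖WithLp.toLp 2 v‖ := by
  simp [l2norm, EuclideanSpace.norm_eq]

theorem dotp_eq_dotProduct {k : ℕ} (u v : Fin k → ℝ) : dotp u v = dotProduct u v := rfl

variable {n p : ℕ} (X : Matrix (Fin n) (Fin p) ℝ) (bs : Fin p → ℝ)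

theorem convexOn_l2norm_mulVec_sub :
    ConvexOn ℝ Set.univ fun b => l2norm (X.mulVec (b - bs)) := by
  refine ⟨convex_univ, fun b₁ _ b₂ _ a c ha hc hac => ?_⟩
  simp only [l2norm_eq_norm, smul_add_smul_sub_eq hac, Matrix.mulVec_add, Matrix.mulVec_smul,
    WithLp.toLp_add, WithLp.toLp_smul]
  exact (convexOn_norm convex_univ).2 trivial trivial ha hc hac

noncomputable def penalizedCorrelation (h : (Fin p → ℝ) → ℝ≥0∞) (e : Fin n → ℝ)
    (b : Fin p → ℝ) : EReal :=
  (dotp e (X.mulVec (b - bs)) : EReal) - (h b : EReal)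

theorem Fval_add_sq_half (h : (Fin p → ℝ) → ℝ≥0∞) (e : Fin n → ℝ) (t : ℝ) :
    Fval X bs h e t + ((t ^ 2 / 2 : ℝ) : EReal) =
      sSup (penalizedCorrelation X bs h e '' {b | l2norm (X.mulVec (b - bs)) ≤ t}) := by
  rw [Fval, EReal.sub_add_cancel]
  congr 1
  ext x
  simp [penalizedCorrelation, eq_comm]

theorem penalizedCorrelation_concave {h : (Fin p → ℝ) → ℝ≥0∞}
    (hconv : ∀ b₁ b₂ : Fin p → ℝ, ∀ a : ℝ, 0 ≤ a → a ≤ 1 →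
      h (a • b₁ + (1 - a) • b₂) ≤ ENNReal.ofReal a * h b₁ + ENNReal.ofReal (1 - a) * h b₂)
    (e : Fin n → ℝ) (b₁ b₂ : Fin p → ℝ) {a : ℝ} (ha₀ : 0 < a) (ha₁ : a < 1) :
    (a : EReal) * penalizedCorrelation X bs h e b₁ +
        ((1 - a : ℝ) : EReal) * penalizedCorrelation X bs h e b₂ ≤
      penalizedCorrelation X bs h e (a • b₁ + (1 - a) • b₂) := by
  have hfit : dotp e (X.mulVec (a • b₁ + (1 - a) • b₂ - bs)) =
      a * dotp e (X.mulVec (b₁ - bs)) + (1 - a) * dotp e (X.mulVec (b₂ - bs)) := by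
    simp only [dotp_eq_dotProduct, smul_add_smul_sub_eq (add_sub_cancel a 1), Matrix.mulVec_add,
      Matrix.mulVec_smul, dotProduct_add, dotProduct_smul, smul_eq_mul]
  simp only [penalizedCorrelation, hfit]
  exact EReal.coe_mul_sub_add_coe_mul_sub_le ha₀ (sub_pos.2 ha₁) (hconv b₁ b₂ a ha₀.le ha₁.le)

end LinearModel

/-- if the penalty `h : ℝ^p → [0,∞]` is convex, then `F` is `1`-strongly
concave on `[0,∞)`, i.e. the function `t ↦ F(t) + t²/2` is concave on `[0,∞)`. -/
theorem F_one_strongly_concave {n p : ℕ} (X : Matrix (Fin n) (Fin p) ℝ)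
    (bs : Fin p → ℝ) (ε : Fin n → ℝ) (h : (Fin p → ℝ) → ℝ≥0∞)
    (hconv : ∀ b₁ b₂ : Fin p → ℝ, ∀ a : ℝ, 0 ≤ a → a ≤ 1 →
      h (a • b₁ + (1 - a) • b₂) ≤ ENNReal.ofReal a * h b₁ + ENNReal.ofReal (1 - a) * h b₂) :
    ∀ s t : ℝ, 0 ≤ s → 0 ≤ t → ∀ a : ℝ, 0 ≤ a → a ≤ 1 →
      (a : EReal) * (Fval X bs h ε s + ((s ^ 2 / 2 : ℝ) : EReal)) +
        ((1 - a : ℝ) : EReal) * (Fval X bs h ε t + ((t ^ 2 / 2 : ℝ) : EReal)) ≤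
      Fval X bs h ε (a * s + (1 - a) * t) +
        (((a * s + (1 - a) * t) ^ 2 / 2 : ℝ) : EReal) := by
  intro s t _ _ a ha₀ ha₁
  simp only [Fval_add_sq_half]
  exact sSup_image_sublevel_concave
    (fun b₁ b₂ a ha₀ ha₁ => penalizedCorrelation_concave X bs hconv ε b₁ b₂ ha₀ ha₁)
    (convexOn_l2norm_mulVec_sub X bs) s t ha₀ ha₁
end
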